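/- arXiv:1711.05515 — 2 statements merged into one kernel-verified Lean document; each statement's English description precedes it below -/
import Mathlib

section
/- Invariance of the extended tangent frame under the linearized dynamics. Let M ⊂ ℝ^{2n} be open with exact symplectic form Ω(z) = (Da(z))^T − Da(z), let H: M → ℝ and p: M → ℝ^{n−d} be C², with Hamiltonian vector fields X_H = Ω^{-1}(DH)^T and X_p = Ω^{-1}(Dp)^T, and assume the commuting condition DX_H(z)X_p(z) = DX_p(z)[X_H(z)] holds for all z ∈ M (which follows from the involution {H,p_j} = 0). Suppose K: 𝕋^d → M is C² and satisfies the invariance equation X_H(K(θ)) = DK(θ)ω for all θ ∈ 𝕋^d. Then the frame L(θ) = (DK(θ) X_p(K(θ))) satisfies DX_H(K(θ)) L(θ) − DL(θ)[ω] = O_{2n×n} for all θ ∈ 𝕋^d; that is, both D(DK(θ))[ω] = DX_H(K(θ)) DK(θ) and D(X_p∘K)(θ)[ω] = DX_H(K(θ)) X_p(K(θ)) hold. -/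
open scoped BigOperators
open MeasureTheory
open scoped Matrix

noncomputable section

namespace KAM

/-! ## Complex strips of the torus and periodic functions -/

/-- The open complex strip of width `ρ` around `ℝ^d` (representing `𝕋^d_ρ`). -/
def strip (d : ℕ) (ρ : ℝ) : Set (Fin d → ℂ) := {θ | ∀ i, |(θ i).im| < ρ}

/-- The closed complex strip of width `ρ`. -/
def stripCl (d : ℕ) (ρ : ℝ) : Set (Fin d → ℂ) := {θ | ∀ i, |(θ i).im| ≤ ρ}

/-- 1-periodicity (in each variable) of a function on `ℂ^d`. -/
def Per {d : ℕ} (u : (Fin d → ℂ) → ℂ) : Prop :=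
  ∀ θ (k : Fin d → ℤ), u (θ + fun i => (k i : ℂ)) = u θ

/-- The canonical inclusion `ℝ^d ↪ ℂ^d`. -/
def cx {d : ℕ} (x : Fin d → ℝ) : Fin d → ℂ := fun i => (x i : ℂ)

/-- A real analytic 1-periodic function on the strip `𝕋^d_ρ`: holomorphic on the open strip,
continuous on the closed strip, and real-valued on real points. -/
structure RAnalytic (d : ℕ) (ρ : ℝ) (u : (Fin d → ℂ) → ℂ) : Prop where
  per : Per u
  holo : DifferentiableOn ℂ u (strip d ρ)
  cont : ContinuousOn u (stripCl d ρ)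
  isReal : ∀ x : Fin d → ℝ, (u (cx x)).im = 0

/-! ## Norms -/

/-- Sup-norm of a scalar function over the closed strip. -/
def unorm {d : ℕ} (ρ : ℝ) (u : (Fin d → ℂ) → ℂ) : ℝ :=
  sSup ((fun θ => ‖u θ‖) '' stripCl d ρ)

/-- Norm of a matrix-valued map over the strip: maximal row sum of entry norms. -/
def mnorm {d : ℕ} {I J : Type} [Fintype I] [Fintype J] (ρ : ℝ)
    (M : (Fin d → ℂ) → Matrix I J ℂ) : ℝ :=
  ⨆ i : I, ∑ j : J, unorm ρ (fun θ => M θ i j)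

/-- Norm of a (column) vector-valued map over the strip. -/
def vnorm {d : ℕ} {I : Type} [Fintype I] (ρ : ℝ) (F : (Fin d → ℂ) → I → ℂ) : ℝ :=
  ⨆ i : I, unorm ρ (fun θ => F θ i)

/-- Norm of a constant complex matrix: maximal absolute row sum. -/
def matNorm {I J : Type} [Fintype I] [Fintype J] (M : Matrix I J ℂ) : ℝ :=
  ⨆ i : I, ∑ j : J, ‖M i j‖

/-- Norm of a constant complex (column) vector. -/
def vecNorm {I : Type} [Fintype I] (v : I → ℂ) : ℝ := ⨆ i : I, ‖v i‖

/-- Sup-norm of a scalar function over a set `B ⊆ ℂ^m`. -/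
def bnorm {m : ℕ} (B : Set (Fin m → ℂ)) (f : (Fin m → ℂ) → ℂ) : ℝ :=
  sSup ((fun z => ‖f z‖) '' B)

/-- Norm of a matrix-valued map over a set `B`. -/
def mbnorm {m : ℕ} {I J : Type} [Fintype I] [Fintype J] (B : Set (Fin m → ℂ))
    (M : (Fin m → ℂ) → Matrix I J ℂ) : ℝ :=
  ⨆ i : I, ∑ j : J, bnorm B (fun z => M z i j)

/-- Norm of a vector-valued map over a set `B`. -/
def vbnorm {m : ℕ} {I : Type} [Fintype I] (B : Set (Fin m → ℂ))
    (F : (Fin m → ℂ) → I → ℂ) : ℝ :=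
  ⨆ i : I, bnorm B (fun z => F z i)

/-! ## Derivatives -/

/-- Partial derivative `∂f/∂z_ℓ` of a scalar function on `ℂ^m`. -/
def pd {m : ℕ} (ℓ : Fin m) (f : (Fin m → ℂ) → ℂ) : (Fin m → ℂ) → ℂ :=
  fun z => fderiv ℂ f z (Pi.single ℓ 1)

/-- Jacobian matrix of a vector-valued map. -/
def jac {m : ℕ} {I : Type} (F : (Fin m → ℂ) → I → ℂ) (z : Fin m → ℂ) :
    Matrix I (Fin m) ℂ :=
  fun i ℓ => pd ℓ (fun w => F w i) z

/-- `‖Df‖_B` for scalar `f`: sum of the sup-norms of the partial derivatives. -/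
def d1norm {m : ℕ} (B : Set (Fin m → ℂ)) (f : (Fin m → ℂ) → ℂ) : ℝ :=
  ∑ ℓ : Fin m, bnorm B (pd ℓ f)

/-- `‖D²f‖_B` for scalar `f`. -/
def d2norm {m : ℕ} (B : Set (Fin m → ℂ)) (f : (Fin m → ℂ) → ℂ) : ℝ :=
  ∑ ℓ₁ : Fin m, ∑ ℓ₂ : Fin m, bnorm B (pd ℓ₂ (pd ℓ₁ f))

/-- `‖DM‖_B` for matrix-valued `M`. -/
def md1norm {m : ℕ} {I J : Type} [Fintype I] [Fintype J] (B : Set (Fin m → ℂ))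
    (M : (Fin m → ℂ) → Matrix I J ℂ) : ℝ :=
  ⨆ i : I, ∑ j : J, d1norm B (fun z => M z i j)

/-- `‖D²M‖_B` for matrix-valued `M`. -/
def md2norm {m : ℕ} {I J : Type} [Fintype I] [Fintype J] (B : Set (Fin m → ℂ))
    (M : (Fin m → ℂ) → Matrix I J ℂ) : ℝ :=
  ⨆ i : I, ∑ j : J, d2norm B (fun z => M z i j)

/-- `‖DF‖_B` for (column) vector-valued `F`. -/
def vd1norm {m : ℕ} {I : Type} [Fintype I] (B : Set (Fin m → ℂ))
    (F : (Fin m → ℂ) → I → ℂ) : ℝ :=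
  ⨆ i : I, d1norm B (fun z => F z i)

/-- `‖D²F‖_B` for (column) vector-valued `F`. -/
def vd2norm {m : ℕ} {I : Type} [Fintype I] (B : Set (Fin m → ℂ))
    (F : (Fin m → ℂ) → I → ℂ) : ℝ :=
  ⨆ i : I, d2norm B (fun z => F z i)

/-- Directional derivative `DM(θ)[ω]` of a matrix-valued map, entrywise, in the (real)
direction `ω`. -/
def dirD {d : ℕ} {I J : Type} (M : (Fin d → ℂ) → Matrix I J ℂ) (ω : Fin d → ℝ) :
    (Fin d → ℂ) → Matrix I J ℂ :=
  fun θ i j => ∑ ℓ : Fin d, (ω ℓ : ℂ) * pd ℓ (fun w => M w i j) θ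

/-! ## Averages and the cohomology operator -/

/-- Average `⟨u⟩` of a (periodic) function over the torus. -/
def avg {d : ℕ} (u : (Fin d → ℂ) → ℂ) : ℂ :=
  ∫ x in Set.Icc (0 : Fin d → ℝ) 1, u (cx x)

/-- Entrywise average of a matrix-valued map. -/
def mavg {d : ℕ} {I J : Type} (M : (Fin d → ℂ) → Matrix I J ℂ) : Matrix I J ℂ :=
  fun i j => avg (fun θ => M θ i j)

/-- Entrywise average of a vector-valued map. -/
def vavg {d : ℕ} {I : Type} (F : (Fin d → ℂ) → I → ℂ) : I → ℂ :=
  fun i => avg (fun θ => F θ i)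

/-- The operator `L_ω u = -∑ᵢ ωᵢ ∂u/∂θᵢ`. -/
def Lop {d : ℕ} (ω : Fin d → ℝ) (u : (Fin d → ℂ) → ℂ) : (Fin d → ℂ) → ℂ :=
  fun θ => -∑ i : Fin d, (ω i : ℂ) * pd i u θ

/-! ## Diophantine vectors, distances, realness -/

/-- The Diophantine class `Δ(γ,τ)`. -/
def Dioph (d : ℕ) (γ τ : ℝ) : Set (Fin d → ℝ) :=
  {ω | ∀ k : Fin d → ℤ, k ≠ 0 →
    γ / (∑ i, |(k i : ℝ)|) ^ τ ≤ |∑ i, (k i : ℝ) * ω i|}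

/-- Distance between two sets in a metric space. -/
def setDist {α : Type*} [PseudoMetricSpace α] (s t : Set α) : ℝ :=
  sInf ((fun p : α × α => dist p.1 p.2) '' s ×ˢ t)

/-- A function is real-valued on the real points of `B`. -/
def RealOn {m : ℕ} (B : Set (Fin m → ℂ)) (f : (Fin m → ℂ) → ℂ) : Prop :=
  ∀ x : Fin m → ℝ, cx x ∈ B → (f (cx x)).im = 0

/-! ## Real-variable versions (for statements on `M ⊆ ℝ^{2n}`) -/

/-- Partial derivative of a real function of several real variables. -/
def pdR {m : ℕ} (ℓ : Fin m) (f : (Fin m → ℝ) → ℝ) : (Fin m → ℝ) → ℝ :=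
  fun z => fderiv ℝ f z (Pi.single ℓ 1)

/-- Jacobian matrix of a real vector-valued map. -/
def jacR {m : ℕ} {I : Type} (F : (Fin m → ℝ) → I → ℝ) (z : Fin m → ℝ) :
    Matrix I (Fin m) ℝ :=
  fun i ℓ => pdR ℓ (fun w => F w i) z

/-- Directional derivative `DM(z)[v]` of a real matrix-valued map. -/
def matDirR {m : ℕ} {I J : Type} (M : (Fin m → ℝ) → Matrix I J ℝ) (v : Fin m → ℝ)
    (z : Fin m → ℝ) : Matrix I J ℝ :=
  fun i j => ∑ ℓ : Fin m, v ℓ * pdR ℓ (fun w => M w i j) z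

/-! ## The geometrically adapted frames -/

/-- Index type for the `n = d + (n-d)` columns of the adapted frames. -/
abbrev Idx (n d : ℕ) := Fin d ⊕ Fin (n - d)

/-- The tangent frame `L(θ) = (DK(θ)  X_p(K(θ)))`. -/
def Lframe (n d : ℕ) (K : (Fin d → ℂ) → Fin (2*n) → ℂ)
    (Xp : (Fin (2*n) → ℂ) → Matrix (Fin (2*n)) (Fin (n-d)) ℂ) :
    (Fin d → ℂ) → Matrix (Fin (2*n)) (Idx n d) ℂ :=
  fun θ => Matrix.fromCols (jac K θ) (Xp (K θ))

/-- `G_L(θ) = L(θ)ᵀ G(K(θ)) L(θ)`. -/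
def Gmat (n d : ℕ) (G : (Fin (2*n) → ℂ) → Matrix (Fin (2*n)) (Fin (2*n)) ℂ)
    (K : (Fin d → ℂ) → Fin (2*n) → ℂ)
    (Xp : (Fin (2*n) → ℂ) → Matrix (Fin (2*n)) (Fin (n-d)) ℂ) :
    (Fin d → ℂ) → Matrix (Idx n d) (Idx n d) ℂ :=
  fun θ => (Lframe n d K Xp θ)ᵀ * G (K θ) * Lframe n d K Xp θ

/-- `B(θ) = (L(θ)ᵀ G(K(θ)) L(θ))⁻¹`. -/
def Bmat (n d : ℕ) (G : (Fin (2*n) → ℂ) → Matrix (Fin (2*n)) (Fin (2*n)) ℂ)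
    (K : (Fin d → ℂ) → Fin (2*n) → ℂ)
    (Xp : (Fin (2*n) → ℂ) → Matrix (Fin (2*n)) (Fin (n-d)) ℂ) :
    (Fin d → ℂ) → Matrix (Idx n d) (Idx n d) ℂ :=
  fun θ => (Gmat n d G K Xp θ)⁻¹

/-- `Ω̃ = JᵀΩJ`. -/
def Omt (n : ℕ) (Ω J : (Fin (2*n) → ℂ) → Matrix (Fin (2*n)) (Fin (2*n)) ℂ) :
    (Fin (2*n) → ℂ) → Matrix (Fin (2*n)) (Fin (2*n)) ℂ :=
  fun z => (J z)ᵀ * Ω z * J z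

/-- `A(θ) = -(1/2) B(θ)ᵀ L(θ)ᵀ Ω̃(K(θ)) L(θ) B(θ)`. -/
def Amat (n d : ℕ) (Ω G J : (Fin (2*n) → ℂ) → Matrix (Fin (2*n)) (Fin (2*n)) ℂ)
    (K : (Fin d → ℂ) → Fin (2*n) → ℂ)
    (Xp : (Fin (2*n) → ℂ) → Matrix (Fin (2*n)) (Fin (n-d)) ℂ) :
    (Fin d → ℂ) → Matrix (Idx n d) (Idx n d) ℂ :=
  fun θ => (-(1/2 : ℂ)) •
    ((Bmat n d G K Xp θ)ᵀ * (Lframe n d K Xp θ)ᵀ * Omt n Ω J (K θ) *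
      Lframe n d K Xp θ * Bmat n d G K Xp θ)

/-- `N⁰(θ) = J(K(θ)) L(θ)`. -/
def N0mat (n d : ℕ) (J : (Fin (2*n) → ℂ) → Matrix (Fin (2*n)) (Fin (2*n)) ℂ)
    (K : (Fin d → ℂ) → Fin (2*n) → ℂ)
    (Xp : (Fin (2*n) → ℂ) → Matrix (Fin (2*n)) (Fin (n-d)) ℂ) :
    (Fin d → ℂ) → Matrix (Fin (2*n)) (Idx n d) ℂ :=
  fun θ => J (K θ) * Lframe n d K Xp θ

/-- `N(θ) = L(θ)A(θ) + N⁰(θ)B(θ)`. -/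
def Nmat (n d : ℕ) (Ω G J : (Fin (2*n) → ℂ) → Matrix (Fin (2*n)) (Fin (2*n)) ℂ)
    (K : (Fin d → ℂ) → Fin (2*n) → ℂ)
    (Xp : (Fin (2*n) → ℂ) → Matrix (Fin (2*n)) (Fin (n-d)) ℂ) :
    (Fin d → ℂ) → Matrix (Fin (2*n)) (Idx n d) ℂ :=
  fun θ => Lframe n d K Xp θ * Amat n d Ω G J K Xp θ +
    N0mat n d J K Xp θ * Bmat n d G K Xp θ

/-- The torsion matrix
    `T(θ) = N(θ)ᵀ Ω(K(θ)) (DX_H(K(θ)) N(θ) - DN(θ)[ω])`. -/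
def Tors (n d : ℕ) (Ω G J : (Fin (2*n) → ℂ) → Matrix (Fin (2*n)) (Fin (2*n)) ℂ)
    (XH : (Fin (2*n) → ℂ) → Fin (2*n) → ℂ)
    (K : (Fin d → ℂ) → Fin (2*n) → ℂ)
    (Xp : (Fin (2*n) → ℂ) → Matrix (Fin (2*n)) (Fin (n-d)) ℂ)
    (ω : Fin d → ℝ) :
    (Fin d → ℂ) → Matrix (Idx n d) (Idx n d) ℂ :=
  fun θ => (Nmat n d Ω G J K Xp θ)ᵀ * Ω (K θ) *
    (jac XH (K θ) * Nmat n d Ω G J K Xp θ - dirD (Nmat n d Ω G J K Xp) ω θ)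

/-- The juxtaposed frame `P(θ) = (L(θ)  N(θ))`. -/
def Pmat (n d : ℕ) (Ω G J : (Fin (2*n) → ℂ) → Matrix (Fin (2*n)) (Fin (2*n)) ℂ)
    (K : (Fin d → ℂ) → Fin (2*n) → ℂ)
    (Xp : (Fin (2*n) → ℂ) → Matrix (Fin (2*n)) (Fin (n-d)) ℂ) :
    (Fin d → ℂ) → Matrix (Fin (2*n)) (Idx n d ⊕ Idx n d) ℂ :=
  fun θ => Matrix.fromCols (Lframe n d K Xp θ) (Nmat n d Ω G J K Xp θ)

/-- The standard symplectic matrix `Ω₀` on the index type `I ⊕ I`. -/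
def Om0 (I : Type) [DecidableEq I] : Matrix (I ⊕ I) (I ⊕ I) ℂ :=
  Matrix.fromBlocks 0 (-1) 1 0

/-- The invariance error `E(θ) = X_H(K(θ)) - DK(θ)ω`. -/
def Err (n d : ℕ) (XH : (Fin (2*n) → ℂ) → Fin (2*n) → ℂ)
    (K : (Fin d → ℂ) → Fin (2*n) → ℂ) (ω : Fin d → ℝ) :
    (Fin d → ℂ) → Fin (2*n) → ℂ :=
  fun θ i => XH (K θ) i - Matrix.mulVec (jac K θ) (cx ω) i

/-- The extended frequency vector `ω̂ = (ω, 0_{n-d})`. -/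
def hatOm (n d : ℕ) (ω : Fin d → ℝ) : Idx n d → ℂ :=
  Sum.elim (fun i => (ω i : ℂ)) 0

/-- The extended torsion matrix `T_c(θ)` of the iso-energetic theorem. -/
def TorsC (n d : ℕ) (Ω G J : (Fin (2*n) → ℂ) → Matrix (Fin (2*n)) (Fin (2*n)) ℂ)
    (XH : (Fin (2*n) → ℂ) → Fin (2*n) → ℂ)
    (K : (Fin d → ℂ) → Fin (2*n) → ℂ)
    (Xp : (Fin (2*n) → ℂ) → Matrix (Fin (2*n)) (Fin (n-d)) ℂ)
    (c : (Fin (2*n) → ℂ) → ℂ)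
    (ω : Fin d → ℝ) :
    (Fin d → ℂ) → Matrix (Idx n d ⊕ Unit) (Idx n d ⊕ Unit) ℂ :=
  fun θ => Matrix.fromBlocks (Tors n d Ω G J XH K Xp ω θ)
    (fun i _ => hatOm n d ω i)
    (fun _ j => Matrix.vecMul (fun ℓ => pd ℓ c (K θ)) (Nmat n d Ω G J K Xp θ) j)
    0

end KAM

/-! Differentiating the invariance equation `X_H ∘ K = DK ω` and using the symmetry of second
derivatives gives `D(DK)[ω] = D(X_H ∘ K) = DX_H(K) DK`. For the other columns, the chain rule gives
`D(X_p ∘ K)[ω] = DX_p(K)[DK ω] = DX_p(K)[X_H(K)]`, which is `DX_H(K) X_p(K)` by the commuting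
condition. -/

section Differentiability

open Matrix

variable {𝕜 E : Type*} [NontriviallyNormedField 𝕜] [NormedAddCommGroup E] [NormedSpace 𝕜 E]
  {ι : Type*} [Fintype ι] [DecidableEq ι] {A : E → Matrix ι ι 𝕜} {z : E}

theorem DifferentiableAt.matrix_det (hA : ∀ i j, DifferentiableAt 𝕜 (fun w => A w i j) z) :
    DifferentiableAt 𝕜 (fun w => (A w).det) z := by
  simp only [det_apply']
  exact DifferentiableAt.fun_sum fun σ _ =>
    (HasFDerivAt.finsetProd fun i _ => (hA (σ i) i).hasFDerivAt).differentiableAt.const_mul _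

theorem DifferentiableAt.matrix_inv_apply
    (hA : ∀ i j, DifferentiableAt 𝕜 (fun w => A w i j) z) (hdet : (A z).det ≠ 0) (i j : ι) :
    DifferentiableAt 𝕜 (fun w => (A w)⁻¹ i j) z := by
  have hadj : DifferentiableAt 𝕜 (fun w => (A w).adjugate i j) z := by
    simp only [adjugate_apply]
    refine DifferentiableAt.matrix_det fun k l => ?_
    by_cases hk : k = j
    · simp only [hk, updateRow_self]
      exact differentiableAt_const _
    · simpa only [updateRow_ne hk] using hA k l
  simp only [inv_def, Matrix.smul_apply, Ring.inverse_eq_inv', smul_eq_mul]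
  exact ((DifferentiableAt.matrix_det hA).inv hdet).mul hadj

end Differentiability

namespace KAM

open Matrix

section Calculus

variable {m N : ℕ}

theorem sum_mul_pdR (f : (Fin m → ℝ) → ℝ) (z v : Fin m → ℝ) :
    ∑ ℓ, v ℓ * pdR ℓ f z = fderiv ℝ f z v := by
  conv_rhs => rw [← Finset.univ_sum_single v, map_sum]
  refine Finset.sum_congr rfl fun ℓ _ => ?_
  rw [show Pi.single ℓ (v ℓ) = v ℓ • Pi.single ℓ (1 : ℝ) by simp [← Pi.single_smul],
    map_smul, smul_eq_mul]
  rfl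

theorem matDirR_apply {I J : Type} (A : (Fin m → ℝ) → Matrix I J ℝ) (v z : Fin m → ℝ)
    (i : I) (j : J) : matDirR A v z i j = fderiv ℝ (fun w => A w i j) z v :=
  sum_mul_pdR _ _ _

theorem jacR_mul_apply {I J : Type} (F : (Fin m → ℝ) → I → ℝ) (z : Fin m → ℝ)
    (A : Matrix (Fin m) J ℝ) (i : I) (j : J) :
    (jacR F z * A) i j = fderiv ℝ (fun w => F w i) z (A.col j) := by
  simp only [mul_apply, jacR, col_apply, ← sum_mul_pdR, mul_comm]

theorem jacR_mulVec {I : Type} (F : (Fin m → ℝ) → I → ℝ) (z v : Fin m → ℝ) :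
    jacR F z *ᵥ v = fun i => fderiv ℝ (fun w => F w i) z v := by
  ext i
  simp only [mulVec, dotProduct, jacR, ← sum_mul_pdR, mul_comm]

theorem fderiv_comp_apply_eq_jacR_mulVec {g : (Fin N → ℝ) → ℝ}
    {K : (Fin m → ℝ) → Fin N → ℝ} {x : Fin m → ℝ} (hg : DifferentiableAt ℝ g (K x))
    (hK : ∀ k, DifferentiableAt ℝ (fun y => K y k) x) (v : Fin m → ℝ) :
    fderiv ℝ (fun y => g (K y)) x v = fderiv ℝ g (K x) (jacR K x *ᵥ v) := by
  rw [fderiv_fun_comp x hg (differentiableAt_pi.2 hK), fderiv_pi hK, jacR_mulVec]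
  rfl

theorem matDirR_comp {I J : Type} {A : (Fin N → ℝ) → Matrix I J ℝ}
    {K : (Fin m → ℝ) → Fin N → ℝ} {x : Fin m → ℝ}
    (hA : ∀ i j, DifferentiableAt ℝ (fun z => A z i j) (K x))
    (hK : ∀ k, DifferentiableAt ℝ (fun y => K y k) x) (v : Fin m → ℝ) :
    matDirR (fun y => A (K y)) v x = matDirR A (jacR K x *ᵥ v) (K x) := by
  ext i j
  rw [matDirR_apply, matDirR_apply, fderiv_comp_apply_eq_jacR_mulVec (hA i j) hK]

theorem jacR_comp {I : Type} {g : (Fin N → ℝ) → I → ℝ} {K : (Fin m → ℝ) → Fin N → ℝ}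
    {x : Fin m → ℝ} (hg : ∀ i, DifferentiableAt ℝ (fun z => g z i) (K x))
    (hK : ∀ k, DifferentiableAt ℝ (fun y => K y k) x) :
    jacR (fun y => g (K y)) x = jacR g (K x) * jacR K x := by
  ext i ℓ
  rw [jacR_mul_apply, ← mulVec_single_one, ← fderiv_comp_apply_eq_jacR_mulVec (hg i) hK]
  rfl

theorem fderiv_fderiv_apply_comm {E F : Type*} [NormedAddCommGroup E] [NormedSpace ℝ E]
    [NormedAddCommGroup F] [NormedSpace ℝ F] {f : E → F} {x : E} (hf : ContDiffAt ℝ 2 f x)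
    (u w : E) :
    fderiv ℝ (fun y => fderiv ℝ f y u) x w = fderiv ℝ (fun y => fderiv ℝ f y w) x u := by
  have hf' : DifferentiableAt ℝ (fderiv ℝ f) x :=
    (hf.fderiv_right (m := 1) (by norm_num)).differentiableAt one_ne_zero
  rw [fderiv_clm_apply hf' (differentiableAt_const u),
    fderiv_clm_apply hf' (differentiableAt_const w)]
  simpa using hf.isSymmSndFDerivAt (by simp) w u

theorem matDirR_jacR {K : (Fin m → ℝ) → Fin N → ℝ} {x : Fin m → ℝ}
    (hK : ∀ k, ContDiffAt ℝ 2 (fun y => K y k) x) (v : Fin m → ℝ) :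
    matDirR (jacR K) v x = jacR (fun y => jacR K y *ᵥ v) x := by
  ext k ℓ
  rw [matDirR_apply]
  simp only [jacR_mulVec]
  exact fderiv_fderiv_apply_comm (hK k) _ _

theorem matDirR_fromCols {I J₁ J₂ : Type} (A : (Fin m → ℝ) → Matrix I J₁ ℝ)
    (B : (Fin m → ℝ) → Matrix I J₂ ℝ) (v x : Fin m → ℝ) :
    matDirR (fun y => fromCols (A y) (B y)) v x = fromCols (matDirR A v x) (matDirR B v x) := by
  ext i (j | j) <;> rfl

theorem _root_.ContDiffAt.differentiableAt_pdR {f : (Fin m → ℝ) → ℝ} {z : Fin m → ℝ}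
    (hf : ContDiffAt ℝ 2 f z) (ℓ : Fin m) : DifferentiableAt ℝ (pdR ℓ f) z :=
  ((hf.fderiv_right (m := 1) (by norm_num)).clm_apply contDiffAt_const).differentiableAt
    one_ne_zero

end Calculus

section Symplectic

variable {N : ℕ} {M : Set (Fin N → ℝ)} {a : (Fin N → ℝ) → Fin N → ℝ}
  {Ω : (Fin N → ℝ) → Matrix (Fin N) (Fin N) ℝ} {z : Fin N → ℝ}

theorem differentiableAt_inv_apply_of_eq_transpose_sub_jacR (hM : IsOpen M)
    (ha : ∀ i, ContDiffOn ℝ 2 (fun z => a z i) M)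
    (hΩ : ∀ z ∈ M, Ω z = (jacR a z)ᵀ - jacR a z) (hinv : ∀ z ∈ M, IsUnit (Ω z))
    (hz : z ∈ M) (i j : Fin N) :
    DifferentiableAt ℝ (fun w => (Ω w)⁻¹ i j) z := by
  have hΩd : ∀ k l, DifferentiableAt ℝ (fun w => Ω w k l) z := by
    intro k l
    have hΩ_eq : (fun w => Ω w k l) =ᶠ[nhds z] fun w => jacR a w l k - jacR a w k l := by
      filter_upwards [hM.mem_nhds hz] with w hw
      rw [hΩ w hw, Matrix.sub_apply, transpose_apply]
    rw [hΩ_eq.differentiableAt_iff]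
    exact (((ha l).contDiffAt (hM.mem_nhds hz)).differentiableAt_pdR k).sub
      (((ha k).contDiffAt (hM.mem_nhds hz)).differentiableAt_pdR l)
  exact DifferentiableAt.matrix_inv_apply hΩd
    ((isUnit_iff_isUnit_det _).1 (hinv z hz)).ne_zero i j

theorem differentiableAt_hamiltonianVectorField (hM : IsOpen M)
    (ha : ∀ i, ContDiffOn ℝ 2 (fun z => a z i) M)
    (hΩ : ∀ z ∈ M, Ω z = (jacR a z)ᵀ - jacR a z) (hinv : ∀ z ∈ M, IsUnit (Ω z))
    {G : (Fin N → ℝ) → ℝ} (hG : ContDiffOn ℝ 2 G M) {X : (Fin N → ℝ) → Fin N → ℝ}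
    (hX : ∀ z ∈ M, X z = (Ω z)⁻¹ *ᵥ fun ℓ => pdR ℓ G z) (hz : z ∈ M) (i : Fin N) :
    DifferentiableAt ℝ (fun w => X w i) z := by
  have hX_eq : (fun w => X w i) =ᶠ[nhds z] fun w => ∑ ℓ, (Ω w)⁻¹ i ℓ * pdR ℓ G w := by
    filter_upwards [hM.mem_nhds hz] with w hw
    rw [hX w hw]
    rfl
  rw [hX_eq.differentiableAt_iff]
  exact DifferentiableAt.fun_sum fun ℓ _ =>
    (differentiableAt_inv_apply_of_eq_transpose_sub_jacR hM ha hΩ hinv hz i ℓ).mul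
      ((hG.contDiffAt (hM.mem_nhds hz)).differentiableAt_pdR ℓ)

theorem differentiableAt_hamiltonianVectorFields (hM : IsOpen M)
    (ha : ∀ i, ContDiffOn ℝ 2 (fun z => a z i) M)
    (hΩ : ∀ z ∈ M, Ω z = (jacR a z)ᵀ - jacR a z) (hinv : ∀ z ∈ M, IsUnit (Ω z))
    {J : Type} {p : (Fin N → ℝ) → J → ℝ} (hp : ∀ j, ContDiffOn ℝ 2 (fun z => p z j) M)
    {X : (Fin N → ℝ) → Matrix (Fin N) J ℝ} (hX : ∀ z ∈ M, X z = (Ω z)⁻¹ * (jacR p z)ᵀ)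
    (hz : z ∈ M) (i : Fin N) (j : J) :
    DifferentiableAt ℝ (fun w => X w i j) z :=
  differentiableAt_hamiltonianVectorField (X := fun w i => X w i j) hM ha hΩ hinv (hp j)
    (fun w hw => by ext k; rw [hX w hw]; rfl) hz i

end Symplectic

end KAM

open KAM Matrix in
theorem tangent_frame_invariance_general {n d : ℕ}
    (M : Set (Fin (2*n) → ℝ)) (hM : IsOpen M)
    (a : (Fin (2*n) → ℝ) → Fin (2*n) → ℝ)
    (ha : ∀ i, ContDiffOn ℝ 2 (fun z => a z i) M)
    (H : (Fin (2*n) → ℝ) → ℝ) (hH : ContDiffOn ℝ 2 H M)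
    (p : (Fin (2*n) → ℝ) → Fin (n-d) → ℝ)
    (hp : ∀ j, ContDiffOn ℝ 2 (fun z => p z j) M)
    (Ω : (Fin (2*n) → ℝ) → Matrix (Fin (2*n)) (Fin (2*n)) ℝ)
    (hΩ : ∀ z ∈ M, Ω z = (jacR a z)ᵀ - jacR a z)
    (hinv : ∀ z ∈ M, IsUnit (Ω z))
    (XH : (Fin (2*n) → ℝ) → Fin (2*n) → ℝ)
    (hXH : ∀ z ∈ M, XH z = Matrix.mulVec (Ω z)⁻¹ (fun ℓ => pdR ℓ H z))
    (Xp : (Fin (2*n) → ℝ) → Matrix (Fin (2*n)) (Fin (n-d)) ℝ)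
    (hXp : ∀ z ∈ M, Xp z = (Ω z)⁻¹ * (jacR p z)ᵀ)
    (hcomm : ∀ z ∈ M, jacR XH z * Xp z = matDirR Xp (XH z) z)
    (ω : Fin d → ℝ)
    (K : (Fin d → ℝ) → Fin (2*n) → ℝ)
    (hKC2 : ∀ i, ContDiff ℝ 2 (fun x => K x i))
    (hKM : ∀ x, K x ∈ M)
    (hinvK : ∀ x, XH (K x) = Matrix.mulVec (jacR K x) ω) :
    ∀ x : Fin d → ℝ,
      (jacR XH (K x) *
          Matrix.fromCols (jacR K x) (Xp (K x)) -
        matDirR (fun y => Matrix.fromCols (jacR K y) (Xp (K y))) ω x = 0) ∧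
      (matDirR (fun y => jacR K y) ω x = jacR XH (K x) * jacR K x) ∧
      (matDirR (fun y => Xp (K y)) ω x = jacR XH (K x) * Xp (K x)) := by
  intro x
  have hK : ∀ k, DifferentiableAt ℝ (fun y => K y k) x :=
    fun k => (hKC2 k).differentiable two_ne_zero x
  have hDK : matDirR (fun y => jacR K y) ω x = jacR XH (K x) * jacR K x := by
    rw [matDirR_jacR (fun k => (hKC2 k).contDiffAt) ω, ← jacR_comp
      (differentiableAt_hamiltonianVectorField hM ha hΩ hinv hH hXH (hKM x)) hK]
    simp only [hinvK]
  have hXpK : matDirR (fun y => Xp (K y)) ω x = jacR XH (K x) * Xp (K x) := by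
    rw [matDirR_comp (differentiableAt_hamiltonianVectorFields hM ha hΩ hinv hp hXp (hKM x)) hK,
      ← hinvK, hcomm _ (hKM x)]
  refine ⟨?_, hDK, hXpK⟩
  rw [mul_fromCols, matDirR_fromCols, hDK, hXpK, sub_self]

open KAM Matrix in
/-- Invariance of the extended tangent frame `L(θ) = (DK(θ)  X_p(K(θ)))`
under the linearized dynamics: if `K` is invariant with frequency `ω` and `X_H`, `X_p`
commute, then `DX_H(K(θ))L(θ) - DL(θ)[ω] = 0`, i.e. both
`D(DK)(θ)[ω] = DX_H(K(θ))DK(θ)` and `D(X_p∘K)(θ)[ω] = DX_H(K(θ))X_p(K(θ))`. -/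
theorem tangent_frame_invariance {n d : ℕ} (hd2 : 2 ≤ d) (hdn : d ≤ n)
    (M : Set (Fin (2*n) → ℝ)) (hM : IsOpen M)
    (a : (Fin (2*n) → ℝ) → Fin (2*n) → ℝ)
    (ha : ∀ i, ContDiffOn ℝ 2 (fun z => a z i) M)
    (H : (Fin (2*n) → ℝ) → ℝ) (hH : ContDiffOn ℝ 2 H M)
    (p : (Fin (2*n) → ℝ) → Fin (n-d) → ℝ)
    (hp : ∀ j, ContDiffOn ℝ 2 (fun z => p z j) M)
    (Ω : (Fin (2*n) → ℝ) → Matrix (Fin (2*n)) (Fin (2*n)) ℝ)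
    (hΩ : ∀ z ∈ M, Ω z = (jacR a z)ᵀ - jacR a z)
    (hinv : ∀ z ∈ M, IsUnit (Ω z))
    (XH : (Fin (2*n) → ℝ) → Fin (2*n) → ℝ)
    (hXH : ∀ z ∈ M, XH z = Matrix.mulVec (Ω z)⁻¹ (fun ℓ => pdR ℓ H z))
    (Xp : (Fin (2*n) → ℝ) → Matrix (Fin (2*n)) (Fin (n-d)) ℝ)
    (hXp : ∀ z ∈ M, Xp z = (Ω z)⁻¹ * (jacR p z)ᵀ)
    (hcomm : ∀ z ∈ M, jacR XH z * Xp z = matDirR Xp (XH z) z)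
    (ω : Fin d → ℝ)
    (K : (Fin d → ℝ) → Fin (2*n) → ℝ)
    (hKper : ∀ x (k : Fin d → ℤ), K (x + fun i => (k i : ℝ)) = K x)
    (hKC2 : ∀ i, ContDiff ℝ 2 (fun x => K x i))
    (hKM : ∀ x, K x ∈ M)
    (hinvK : ∀ x, XH (K x) = Matrix.mulVec (jacR K x) ω) :
    ∀ x : Fin d → ℝ,
      (jacR XH (K x) *
          Matrix.fromCols (jacR K x) (Xp (K x)) -
        matDirR (fun y => Matrix.fromCols (jacR K y) (Xp (K y))) ω x = 0) ∧
      (matDirR (fun y => jacR K y) ω x = jacR XH (K x) * jacR K x) ∧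
      (matDirR (fun y => Xp (K y)) ω x = jacR XH (K x) * Xp (K x)) :=
  tangent_frame_invariance_general M hM a ha H hH p hp Ω hΩ hinv XH hXH Xp hXp hcomm ω K hKC2 hKM
    hinvK
end
end

section
/- Torsion rows for an exactly invariant torus with a symplectic frame. Let M ⊂ ℝ^{2n} be open with exact symplectic form Ω(z) = (Da(z))^T − Da(z), H: M → ℝ with X_H = Ω^{-1}(DH)^T, and p = (p₁,…,p_{n−d}): M → ℝ^{n−d} with X_p = Ω^{-1}(Dp)^T. Suppose K: 𝕋^d → M is C¹ and satisfies X_H(K(θ)) = DK(θ)ω for all θ, and suppose N: 𝕋^d → ℝ^{2n×n} is any map for which the juxtaposed frame P(θ) = (L(θ) N(θ)), with L(θ) = (DK(θ) X_p(K(θ))), is symplectic: P(θ)^T Ω(K(θ)) P(θ) = Ω₀ for all θ, where Ω₀ = [[O_n, −I_n],[I_n, O_n]]. Then for all θ ∈ 𝕋^d: DH(K(θ)) N(θ) = (ω^T, 0_{n−d}^T) ∈ ℝ^{1×n}, and for each j = 1,…,n−d, Dp_j(K(θ)) N(θ) = e_{d+j}^T, where e_{d+j} is the (d+j)-th canonical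 basis vector of ℝ^n. -/
open scoped BigOperators
open MeasureTheory
open scoped Matrix

noncomputable section

/-! Reading off the lower-left block of `PᵀΩP = Ω₀` gives `NᵀΩL = I`. Invariance and the
definition of Hamiltonian vector fields give `DH(K)ᵀ = Ω X_H(K) = Ω L (ω, 0)` and
`Dp_j(K)ᵀ = Ω X_{p_j}(K) = Ω L e_{d+j}`, so `DH(K) N` and `Dp_j(K) N` are the corresponding
columns of `NᵀΩL = I`. -/

namespace Matrix

variable {R m ι : Type*} [CommRing R] [Fintype m] [DecidableEq ι]

theorem transpose_mul_mul_eq_one_of_fromCols_symplectic {L N : Matrix m ι R}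
    {Ω : Matrix m m R} (h : (fromCols L N)ᵀ * Ω * fromCols L N = fromBlocks 0 (-1) 1 0) :
    Nᵀ * Ω * L = 1 := by
  rw [transpose_fromCols, fromRows_mul, fromRows_mul_fromCols] at h
  simpa using congrArg toBlocks₂₁ h

theorem mulVec_mulVec_vecMul_of_transpose_mul_mul_eq_one [Fintype ι] {L N : Matrix m ι R}
    {Ω : Matrix m m R} (h : Nᵀ * Ω * L = 1) (c : ι → R) : (Ω *ᵥ (L *ᵥ c)) ᵥ* N = c := by
  rw [← mulVec_transpose, mulVec_mulVec, mulVec_mulVec, h, one_mulVec]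

end Matrix

open KAM Matrix in
theorem torsion_rows_invariant_torus_general {n d : ℕ}
    (M : Set (Fin (2*n) → ℝ))
    (H : (Fin (2*n) → ℝ) → ℝ)
    (p : (Fin (2*n) → ℝ) → Fin (n-d) → ℝ)
    (Ω : (Fin (2*n) → ℝ) → Matrix (Fin (2*n)) (Fin (2*n)) ℝ)
    (hinv : ∀ z ∈ M, IsUnit (Ω z))
    (XH : (Fin (2*n) → ℝ) → Fin (2*n) → ℝ)
    (hXH : ∀ z ∈ M, XH z = Matrix.mulVec (Ω z)⁻¹ (fun ℓ => pdR ℓ H z))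
    (Xp : (Fin (2*n) → ℝ) → Matrix (Fin (2*n)) (Fin (n-d)) ℝ)
    (hXp : ∀ z ∈ M, Xp z = (Ω z)⁻¹ * (jacR p z)ᵀ)
    (ω : Fin d → ℝ)
    (K : (Fin d → ℝ) → Fin (2*n) → ℝ)
    (hKM : ∀ x, K x ∈ M)
    (hinvK : ∀ x, XH (K x) = Matrix.mulVec (jacR K x) ω)
    (N : (Fin d → ℝ) → Matrix (Fin (2*n)) (Idx n d) ℝ)
    (hsym : ∀ x,
      (Matrix.fromCols (Matrix.fromCols (jacR K x) (Xp (K x))) (N x))ᵀ *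
          Ω (K x) *
          Matrix.fromCols (Matrix.fromCols (jacR K x) (Xp (K x))) (N x) =
        (Matrix.fromBlocks 0 (-1) 1 0 :
          Matrix (Idx n d ⊕ Idx n d) (Idx n d ⊕ Idx n d) ℝ)) :
    ∀ x : Fin d → ℝ,
      (Matrix.vecMul (fun ℓ => pdR ℓ H (K x)) (N x)
          = Sum.elim (fun i => ω i) (fun _ => (0:ℝ))) ∧
      ∀ j : Fin (n-d),
        Matrix.vecMul (fun ℓ => pdR ℓ (fun z => p z j) (K x)) (N x)
          = Pi.single (Sum.inr j : Idx n d) 1 := by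
  intro x
  have hdet : IsUnit (Ω (K x)).det := (isUnit_iff_isUnit_det _).mp (hinv _ (hKM x))
  have hframe := transpose_mul_mul_eq_one_of_fromCols_symplectic (hsym x)
  refine ⟨?_, fun j => ?_⟩
  · have hgradH : (fun ℓ => pdR ℓ H (K x)) =
        Ω (K x) *ᵥ (fromCols (jacR K x) (Xp (K x)) *ᵥ Sum.elim ω 0) := by
      rw [fromCols_mulVec_sumElim, mulVec_zero, add_zero, ← hinvK, hXH _ (hKM x),
        mulVec_mulVec, mul_nonsing_inv _ hdet, one_mulVec]
    rw [hgradH, mulVec_mulVec_vecMul_of_transpose_mul_mul_eq_one hframe]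
    rfl
  · have hgradp : (fun ℓ => pdR ℓ (fun z => p z j) (K x)) =
        Ω (K x) *ᵥ (fromCols (jacR K x) (Xp (K x)) *ᵥ Pi.single (Sum.inr j) 1) := by
      have hcol : fromCols (jacR K x) (Xp (K x)) *ᵥ Pi.single (Sum.inr j) 1 =
          Xp (K x) *ᵥ Pi.single j 1 := by
        ext; simp
      rw [hcol, hXp _ (hKM x), mulVec_mulVec, mul_nonsing_inv_cancel_left _ _ hdet,
        mulVec_single_one]
      rfl
    rw [hgradp, mulVec_mulVec_vecMul_of_transpose_mul_mul_eq_one hframe]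

open KAM Matrix in
/-- Torsion rows for an exactly invariant torus with a symplectic frame:
if `K` is invariant (`X_H∘K = DK·ω`) and `P = (L N)` is symplectic
(`PᵀΩ(K)P = Ω₀`), then `DH(K(θ))N(θ) = (ωᵀ, 0ᵀ)` and `Dp_j(K(θ))N(θ) = e_{d+j}ᵀ`. -/
theorem torsion_rows_invariant_torus {n d : ℕ} (hd2 : 2 ≤ d) (hdn : d ≤ n)
    (M : Set (Fin (2*n) → ℝ)) (hM : IsOpen M)
    (a : (Fin (2*n) → ℝ) → Fin (2*n) → ℝ)
    (ha : ∀ i, ∀ z ∈ M, DifferentiableAt ℝ (fun w => a w i) z)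
    (H : (Fin (2*n) → ℝ) → ℝ) (hH : ∀ z ∈ M, DifferentiableAt ℝ H z)
    (p : (Fin (2*n) → ℝ) → Fin (n-d) → ℝ)
    (hp : ∀ j, ∀ z ∈ M, DifferentiableAt ℝ (fun w => p w j) z)
    (Ω : (Fin (2*n) → ℝ) → Matrix (Fin (2*n)) (Fin (2*n)) ℝ)
    (hΩ : ∀ z ∈ M, Ω z = (jacR a z)ᵀ - jacR a z)
    (hinv : ∀ z ∈ M, IsUnit (Ω z))
    (XH : (Fin (2*n) → ℝ) → Fin (2*n) → ℝ)
    (hXH : ∀ z ∈ M, XH z = Matrix.mulVec (Ω z)⁻¹ (fun ℓ => pdR ℓ H z))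
    (Xp : (Fin (2*n) → ℝ) → Matrix (Fin (2*n)) (Fin (n-d)) ℝ)
    (hXp : ∀ z ∈ M, Xp z = (Ω z)⁻¹ * (jacR p z)ᵀ)
    (ω : Fin d → ℝ)
    (K : (Fin d → ℝ) → Fin (2*n) → ℝ)
    (hKper : ∀ x (k : Fin d → ℤ), K (x + fun i => (k i : ℝ)) = K x)
    (hKC1 : ∀ i, ContDiff ℝ 1 (fun x => K x i))
    (hKM : ∀ x, K x ∈ M)
    (hinvK : ∀ x, XH (K x) = Matrix.mulVec (jacR K x) ω)
    (N : (Fin d → ℝ) → Matrix (Fin (2*n)) (Idx n d) ℝ)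
    (hsym : ∀ x,
      (Matrix.fromCols (Matrix.fromCols (jacR K x) (Xp (K x))) (N x))ᵀ *
          Ω (K x) *
          Matrix.fromCols (Matrix.fromCols (jacR K x) (Xp (K x))) (N x) =
        (Matrix.fromBlocks 0 (-1) 1 0 :
          Matrix (Idx n d ⊕ Idx n d) (Idx n d ⊕ Idx n d) ℝ)) :
    ∀ x : Fin d → ℝ,
      (Matrix.vecMul (fun ℓ => pdR ℓ H (K x)) (N x)
          = Sum.elim (fun i => ω i) (fun _ => (0:ℝ))) ∧
      ∀ j : Fin (n-d),
        Matrix.vecMul (fun ℓ => pdR ℓ (fun z => p z j) (K x)) (N x)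
          = Pi.single (Sum.inr j : Idx n d) 1 :=
  torsion_rows_invariant_torus_general M H p Ω hinv XH hXH Xp hXp ω K hKM hinvK N hsym
end
end
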